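/- Let c = (c_1, …, c_n) ∈ ℝ^n have positive entries arranged in descending order, c_1 ≥ c_2 ≥ … ≥ c_n > 0, with c_1 ≥ 1, and let ‖·‖_c be the c-norm on B(H). Then there exist nonzero A, B ∈ B(H) with ‖AB‖_c = ‖A‖_c · ‖B‖_c if and only if c_1 = 1. -/

import Mathlib

/-!
Since `s_k(AB) ≤ ‖A‖ s_k(B)` and `c ≥ 0`, we get `‖AB‖_c ≤ ‖A‖ ‖B‖_c`, while `c_1 ‖A‖ ≤ ‖A‖_c`.
Hence `‖AB‖_c = ‖A‖_c ‖B‖_c` with `A, B ≠ 0` forces `c_1 ‖A‖ ≤ ‖A‖_c ≤ ‖A‖`, i.e. `c_1 ≤ 1`.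
Conversely, a rank-one orthogonal projection `P` satisfies `P² = P` and `‖P‖_c = c_1 ‖P‖ = c_1`,
so `c_1 = 1` gives equality with `A = B = P`.
-/

open scoped InnerProductSpace

variable {H : Type*} [NormedAddCommGroup H] [InnerProductSpace ℂ H] [CompleteSpace H]

/-- The `k`-th singular value (1-indexed) of a bounded operator `A`:
`s_k(A) = inf {‖A - X‖ : rank X < k}`. -/
noncomputable def sval (k : ℕ) (A : H →L[ℂ] H) : ℝ :=
  sInf { r : ℝ | ∃ X : H →L[ℂ] H,
    Module.rank ℂ (LinearMap.range (X : H →ₗ[ℂ] H)) < (k : Cardinal) ∧ r = ‖A - X‖ }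

/-- `f : ℝ^n → ℝ` is a symmetric norm: a norm invariant under permutations of the
coordinates and under sign changes of the coordinates. -/
structure IsSymmetricNorm (n : ℕ) (f : (Fin n → ℝ) → ℝ) : Prop where
  triangle : ∀ x y, f (x + y) ≤ f x + f y
  homog : ∀ (t : ℝ) (x), f (t • x) = |t| * f x
  definite : ∀ x, x ≠ 0 → 0 < f x
  perm_invariant : ∀ (σ : Equiv.Perm (Fin n)) (x), f (fun i => x (σ i)) = f x
  sign_invariant : ∀ (ε : Fin n → ℝ), (∀ i, ε i = 1 ∨ ε i = -1) →
    ∀ x, f (fun i => ε i * x i) = f x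

/-- The unitarily invariant norm induced by a symmetric norm `f` on `ℝ^n`:
`‖A‖_f = f (s_1(A), …, s_n(A))`. -/
noncomputable def normf (n : ℕ) (f : (Fin n → ℝ) → ℝ) (A : H →L[ℂ] H) : ℝ :=
  f (fun j : Fin n => sval (j.1 + 1) A)

/-- The `c`-norm `‖A‖_c = Σ_j c_j s_j(A)`. -/
noncomputable def cnorm (n : ℕ) (c : Fin n → ℝ) (A : H →L[ℂ] H) : ℝ :=
  ∑ j : Fin n, c j * sval (j.1 + 1) A

section SingularValues

variable {E : Type*} [NormedAddCommGroup E] [InnerProductSpace ℂ E] {k : ℕ}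

def lowRankDistances (k : ℕ) (A : E →L[ℂ] E) : Set ℝ :=
  { r | ∃ X : E →L[ℂ] E, (X : E →ₗ[ℂ] E).rank < k ∧ r = ‖A - X‖ }

theorem sval_eq_sInf (A : E →L[ℂ] E) : sval k A = sInf (lowRankDistances k A) := rfl

theorem norm_mem_lowRankDistances (hk : k ≠ 0) (A : E →L[ℂ] E) :
    ‖A‖ ∈ lowRankDistances k A :=
  ⟨0, by simpa [LinearMap.rank_zero] using Nat.pos_of_ne_zero hk, by simp⟩

theorem sval_nonneg (A : E →L[ℂ] E) : 0 ≤ sval k A :=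
  Real.sInf_nonneg (by rintro r ⟨X, -, rfl⟩; positivity)

theorem sval_le_norm_sub {A X : E →L[ℂ] E} (hX : (X : E →ₗ[ℂ] E).rank < k) :
    sval k A ≤ ‖A - X‖ :=
  csInf_le ⟨0, by rintro r ⟨Y, -, rfl⟩; positivity⟩ ⟨X, hX, rfl⟩

theorem sval_eq_zero_of_rank_lt {A : E →L[ℂ] E} (hA : (A : E →ₗ[ℂ] E).rank < k) :
    sval k A = 0 :=
  le_antisymm (by simpa using sval_le_norm_sub (A := A) hA) (sval_nonneg A)

theorem sval_one (A : E →L[ℂ] E) : sval 1 A = ‖A‖ := by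
  have hdist : lowRankDistances 1 A = {‖A‖} := by
    ext r
    constructor
    · rintro ⟨X, hX, rfl⟩
      rw [Nat.cast_one, Cardinal.lt_one_iff, LinearMap.rank, Submodule.rank_eq_zero,
        LinearMap.range_eq_bot, ← ContinuousLinearMap.toLinearMap_zero,
        ContinuousLinearMap.coe_inj] at hX
      simp [hX]
    · rintro rfl
      exact norm_mem_lowRankDistances one_ne_zero A
  rw [sval_eq_sInf, hdist, csInf_singleton]

theorem sval_comp_le (hk : k ≠ 0) (A B : E →L[ℂ] E) :
    sval k (A ∘L B) ≤ ‖A‖ * sval k B := by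
  rw [sval_eq_sInf B, ← smul_eq_mul, ← Real.sInf_smul_of_nonneg (norm_nonneg A)]
  refine le_csInf (Set.Nonempty.smul_set ⟨_, norm_mem_lowRankDistances hk B⟩) ?_
  rintro _ ⟨_, ⟨X, hX, rfl⟩, rfl⟩
  calc sval k (A ∘L B) ≤ ‖A ∘L B - A ∘L X‖ :=
        sval_le_norm_sub ((LinearMap.rank_comp_le_right _ _).trans_lt hX)
    _ ≤ ‖A‖ * ‖B - X‖ := by
        rw [← ContinuousLinearMap.comp_sub]
        exact ContinuousLinearMap.opNorm_comp_le _ _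

end SingularValues

theorem Submodule.norm_starProjection_span_singleton {E : Type*} [NormedAddCommGroup E]
    [InnerProductSpace ℂ E] {x : E} (hx : x ≠ 0) : ‖(ℂ ∙ x).starProjection‖ = 1 :=
  Submodule.norm_starProjection _ (by simpa using hx)

section CNorm

variable {E : Type*} [NormedAddCommGroup E] [InnerProductSpace ℂ E] {n : ℕ} {c : Fin n → ℝ}

theorem mul_norm_le_cnorm (hn : 0 < n) (hc : ∀ i, 0 ≤ c i) (A : E →L[ℂ] E) :
    c ⟨0, hn⟩ * ‖A‖ ≤ cnorm n c A := by
  rw [← sval_one]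
  exact Finset.single_le_sum (f := fun j : Fin n => c j * sval (j.1 + 1) A)
    (fun j _ => mul_nonneg (hc j) (sval_nonneg A)) (Finset.mem_univ (⟨0, hn⟩ : Fin n))

theorem cnorm_comp_le (hc : ∀ i, 0 ≤ c i) (A B : E →L[ℂ] E) :
    cnorm n c (A ∘L B) ≤ ‖A‖ * cnorm n c B := by
  rw [cnorm, cnorm, Finset.mul_sum]
  refine Finset.sum_le_sum fun j _ => ?_
  rw [mul_left_comm]
  exact mul_le_mul_of_nonneg_left (sval_comp_le (Nat.succ_ne_zero _) A B) (hc j)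

theorem cnorm_eq_of_rank_le_one (hn : 0 < n) {A : E →L[ℂ] E}
    (hA : (A : E →ₗ[ℂ] E).rank ≤ 1) : cnorm n c A = c ⟨0, hn⟩ * ‖A‖ := by
  rw [cnorm, Finset.sum_eq_single (⟨0, hn⟩ : Fin n) _ (by simp), sval_one]
  intro j _ hj
  have hj : 1 < j.1 + 1 := by
    simpa [Fin.ext_iff, Nat.pos_iff_ne_zero] using hj
  rw [sval_eq_zero_of_rank_lt (hA.trans_lt (by exact_mod_cast hj)), mul_zero]

theorem le_one_of_cnorm_comp_eq (hn : 0 < n) (hc : ∀ i, 0 ≤ c i) (hc₀ : 0 < c ⟨0, hn⟩)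
    {A B : E →L[ℂ] E} (hA : A ≠ 0) (hB : B ≠ 0)
    (h : cnorm n c (A ∘L B) = cnorm n c A * cnorm n c B) : c ⟨0, hn⟩ ≤ 1 := by
  have hB' : 0 < cnorm n c B :=
    (mul_pos hc₀ (norm_pos_iff.2 hB)).trans_le (mul_norm_le_cnorm hn hc B)
  have hA' : cnorm n c A ≤ ‖A‖ := le_of_mul_le_mul_right (h ▸ cnorm_comp_le hc A B) hB'
  exact le_of_mul_le_mul_right (by simpa using (mul_norm_le_cnorm hn hc A).trans hA')
    (norm_pos_iff.2 hA)

theorem cnorm_starProjection_span_singleton (hn : 0 < n) {x : E} (hx : x ≠ 0) :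
    cnorm n c (ℂ ∙ x).starProjection = c ⟨0, hn⟩ := by
  have hrank : ((ℂ ∙ x).starProjection : E →ₗ[ℂ] E).rank ≤ 1 := by
    rw [LinearMap.rank, Submodule.range_starProjection]
    simpa using rank_span_le (R := ℂ) {x}
  rw [cnorm_eq_of_rank_le_one hn hrank, Submodule.norm_starProjection_span_singleton hx, mul_one]

end CNorm

theorem stmt13_general (n : ℕ) (hn : 0 < n) (hdim : (n : Cardinal) ≤ Module.rank ℂ H)
    (c : Fin n → ℝ) (hpos : ∀ i, 0 < c i)
    (hc1 : 1 ≤ c ⟨0, hn⟩) :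
    (∃ A B : H →L[ℂ] H, A ≠ 0 ∧ B ≠ 0 ∧
        cnorm n c (A ∘L B) = cnorm n c A * cnorm n c B) ↔
      c ⟨0, hn⟩ = 1 := by
  constructor
  · rintro ⟨A, B, hA, hB, h⟩
    exact le_antisymm
      (le_one_of_cnorm_comp_eq hn (fun i => (hpos i).le) (one_pos.trans_le hc1) hA hB h) hc1
  · intro hc
    obtain ⟨x, hx⟩ : ∃ x : H, x ≠ 0 :=
      rank_pos_iff_exists_ne_zero.1 ((Nat.cast_pos.2 hn).trans_le hdim)
    set P := (ℂ ∙ x).starProjection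
    have hP : P ≠ 0 := fun h => by
      simpa [P, h] using Submodule.norm_starProjection_span_singleton hx
    refine ⟨P, P, hP, hP, ?_⟩
    rw [← ContinuousLinearMap.mul_def, (Submodule.isIdempotentElem_starProjection _).eq,
      cnorm_starProjection_span_singleton hn hx, hc, one_mul]

theorem stmt13 (n : ℕ) (hn : 0 < n) (hdim : (n : Cardinal) ≤ Module.rank ℂ H)
    (c : Fin n → ℝ) (hmono : ∀ i j : Fin n, i ≤ j → c j ≤ c i) (hpos : ∀ i, 0 < c i)
    (hc1 : 1 ≤ c ⟨0, hn⟩) :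
    (∃ A B : H →L[ℂ] H, A ≠ 0 ∧ B ≠ 0 ∧
        cnorm n c (A ∘L B) = cnorm n c A * cnorm n c B) ↔
      c ⟨0, hn⟩ = 1 :=
  stmt13_general n hn hdim c hpos hc1
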